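/- arXiv:2003.13776 — 2 statements merged into one kernel-verified Lean document; each statement's English description precedes it below -/
import Mathlib

section
/- Let μ be a finite-energy probability measure on ℝ² minimizing I_α as above, P(μ)(z) = (W_α ⋆ μ)(z) + |z|²/2, and C₀ = ∫P(μ)dμ. Then P(μ)(z) ≥ C₀ for every z not in the support of μ. -/
/-!
Perturb the minimizer towards the point mass at `z`: `μₜ = (1 - t) • μ + t • δ_z` is again an
admissible probability measure, the self-energy of `δ_z` being the finite number `W 0`. Since `μ`
puts no mass on a ball `B(z, r)`, for `μ`-a.e. `w` the kernel `W (z - w)` is bounded by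
`|log r| + |α| + ‖z‖ + ‖w‖`, so the cross terms of the energy of `μₜ` are finite. That energy is
then a quadratic polynomial in `t` whose linear coefficient is `2 (P z - C₀)`, and minimality of `μ`
at `t = 0` forces this coefficient to be nonnegative.
-/

open MeasureTheory Complex Filter Topology Set
open scoped ENNReal

lemma nonneg_of_forall_mem_Ioo_nonneg_mul_add_mul_sq {b c : ℝ}
    (h : ∀ t ∈ Ioo (0 : ℝ) 1, 0 ≤ b * t + c * t ^ 2) : 0 ≤ b := by
  have hlim : Tendsto (fun t => b + c * t) (𝓝[>] 0) (𝓝 b) := by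
    refine Tendsto.mono_left ?_ nhdsWithin_le_nhds
    exact (by fun_prop : Continuous fun t : ℝ => b + c * t).tendsto' 0 b (by simp)
  refine ge_of_tendsto hlim ?_
  filter_upwards [Ioo_mem_nhdsGT one_pos] with t ht
  refine nonneg_of_mul_nonneg_left (b := t) ?_ ht.1
  linear_combination h t ht

namespace MeasureTheory

variable {X : Type*} [MeasurableSpace X]

lemma Measure.prod_smul_add_smul_self (μ ν : Measure X) [SFinite μ] [SFinite ν] (a b : ℝ≥0∞) :
    (a • μ + b • ν).prod (a • μ + b • ν) =
      a ^ 2 • μ.prod μ + (a * b) • (μ.prod ν + ν.prod μ) + b ^ 2 • ν.prod ν := by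
  simp only [Measure.add_prod, Measure.prod_add, Measure.prod_smul_left, Measure.prod_smul_right,
    smul_add, smul_smul, sq, mul_comm b a]
  abel

lemma integrable_norm_of_integrable_sq_norm {E : Type*} [NormedAddCommGroup E] [MeasurableSpace E]
    [OpensMeasurableSpace E] {μ : Measure E} [IsFiniteMeasure μ]
    (h : Integrable (fun w : E => ‖w‖ ^ 2) μ) : Integrable (fun w : E => ‖w‖) μ :=
  ((integrable_const 1).add h).mono' continuous_norm.measurable.aestronglyMeasurable
    (ae_of_all _ fun w => by
      rw [norm_norm, Pi.add_apply]; nlinarith [sq_nonneg (‖w‖ - 1)])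

lemma exists_pos_ae_le_dist_of_measure_eq_zero {Y : Type*} [PseudoMetricSpace Y]
    [MeasurableSpace Y] {μ : Measure Y} {z : Y} {U : Set Y} (hU : U ∈ 𝓝 z) (hμU : μ U = 0) :
    ∃ r > 0, ∀ᵐ w ∂μ, r ≤ dist z w := by
  obtain ⟨r, hr, hball⟩ := Metric.mem_nhds_iff.1 hU
  refine ⟨r, hr, ?_⟩
  filter_upwards [measure_eq_zero_iff_ae_notMem.1 (measure_mono_null hball hμU)] with w hw
  simpa [Metric.mem_ball, dist_comm] using hw

noncomputable def mixDirac (μ : Measure X) (z : X) (t : ℝ) : Measure X :=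
  ENNReal.ofReal (1 - t) • μ + ENNReal.ofReal t • Measure.dirac z

lemma isProbabilityMeasure_mixDirac (μ : Measure X) [IsProbabilityMeasure μ] (z : X) {t : ℝ}
    (ht₀ : 0 ≤ t) (ht₁ : t ≤ 1) : IsProbabilityMeasure (mixDirac μ z t) := by
  constructor
  simp [mixDirac, ← ENNReal.ofReal_add (sub_nonneg.2 ht₁) ht₀]

variable [MeasurableSingletonClass X]

lemma integrable_prod_dirac_iff {μ : Measure X} [SFinite μ] {F : X × X → ℝ} (z : X) :
    Integrable F (μ.prod (Measure.dirac z)) ↔ Integrable (fun x => F (x, z)) μ := by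
  rw [Measure.prod_dirac, (measurableEmbedding_prod_mk_right z).integrable_map_iff]
  rfl

lemma integrable_dirac_prod_iff {μ : Measure X} [SFinite μ] {F : X × X → ℝ} (z : X) :
    Integrable F ((Measure.dirac z).prod μ) ↔ Integrable (fun y => F (z, y)) μ := by
  rw [Measure.dirac_prod, (measurableEmbedding_prodMk_left z).integrable_map_iff]
  rfl

lemma integral_prod_dirac {μ : Measure X} [SFinite μ] (F : X × X → ℝ) (z : X) :
    ∫ p, F p ∂μ.prod (Measure.dirac z) = ∫ x, F (x, z) ∂μ := by
  rw [Measure.prod_dirac, (measurableEmbedding_prod_mk_right z).integral_map]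

lemma integral_dirac_prod {μ : Measure X} [SFinite μ] (F : X × X → ℝ) (z : X) :
    ∫ p, F p ∂(Measure.dirac z).prod μ = ∫ y, F (z, y) ∂μ := by
  rw [Measure.dirac_prod, (measurableEmbedding_prodMk_left z).integral_map]

lemma integrable_mixDirac {μ : Measure X} {f : X → ℝ} (hf : Integrable f μ) (z : X) (t : ℝ) :
    Integrable f (mixDirac μ z t) :=
  (hf.smul_measure ENNReal.ofReal_ne_top).add_measure
    ((integrable_dirac (by simp)).smul_measure ENNReal.ofReal_ne_top)

lemma integral_mixDirac {μ : Measure X} {f : X → ℝ} (hf : Integrable f μ) (z : X) {t : ℝ}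
    (ht₀ : 0 ≤ t) (ht₁ : t ≤ 1) :
    ∫ x, f x ∂mixDirac μ z t = (1 - t) * ∫ x, f x ∂μ + t * f z := by
  rw [mixDirac, integral_add_measure (hf.smul_measure ENNReal.ofReal_ne_top)
    ((integrable_dirac (by simp)).smul_measure ENNReal.ofReal_ne_top)]
  simp [ENNReal.toReal_ofReal, sub_nonneg.2 ht₁, ht₀]

section Prod

variable {μ : Measure X} [IsFiniteMeasure μ] {F : X × X → ℝ} {z : X}

lemma integrable_prod_mixDirac (hF : Integrable F (μ.prod μ))
    (hFl : Integrable (fun x => F (x, z)) μ) (hFr : Integrable (fun y => F (z, y)) μ) (t : ℝ) :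
    Integrable F ((mixDirac μ z t).prod (mixDirac μ z t)) := by
  rw [mixDirac, Measure.prod_smul_add_smul_self, Measure.dirac_prod_dirac]
  exact ((hF.smul_measure (by finiteness)).add_measure
    (((integrable_prod_dirac_iff z).2 hFl).add_measure
      ((integrable_dirac_prod_iff z).2 hFr) |>.smul_measure (by finiteness))).add_measure
    ((integrable_dirac (by simp)).smul_measure (by finiteness))

lemma integral_prod_mixDirac (hF : Integrable F (μ.prod μ))
    (hFl : Integrable (fun x => F (x, z)) μ) (hFr : Integrable (fun y => F (z, y)) μ) {t : ℝ}
    (ht₀ : 0 ≤ t) (ht₁ : t ≤ 1) :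
    ∫ p, F p ∂(mixDirac μ z t).prod (mixDirac μ z t) =
      (1 - t) ^ 2 * ∫ p, F p ∂μ.prod μ +
        (1 - t) * t * (∫ x, F (x, z) ∂μ + ∫ y, F (z, y) ∂μ) + t ^ 2 * F (z, z) := by
  have hFl' := (integrable_prod_dirac_iff z).2 hFl
  have hFr' := (integrable_dirac_prod_iff z).2 hFr
  rw [mixDirac, Measure.prod_smul_add_smul_self, Measure.dirac_prod_dirac,
    integral_add_measure ((hF.smul_measure (by finiteness)).add_measure
      ((hFl'.add_measure hFr').smul_measure (by finiteness)))
      ((integrable_dirac (by simp)).smul_measure (by finiteness)),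
    integral_add_measure (hF.smul_measure (by finiteness))
      ((hFl'.add_measure hFr').smul_measure (by finiteness)),
    integral_smul_measure, integral_smul_measure, integral_smul_measure,
    integral_add_measure hFl' hFr', integral_prod_dirac, integral_dirac_prod, integral_dirac]
  simp [ENNReal.toReal_ofReal, sub_nonneg.2 ht₁, ht₀]

end Prod

noncomputable def interactionEnergy (F : X × X → ℝ) (V : X → ℝ) (μ : Measure X) : ℝ :=
  ∫ p, F p ∂μ.prod μ + ∫ x, V x ∂μ

theorem two_mul_integral_prod_add_integral_le_of_forall_le_mixDirac {μ : Measure X}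
    [IsFiniteMeasure μ] {F : X × X → ℝ} {V : X → ℝ} {z : X} (hF : Integrable F (μ.prod μ))
    (hFl : Integrable (fun x => F (x, z)) μ) (hFr : Integrable (fun y => F (z, y)) μ)
    (hV : Integrable V μ)
    (hmin : ∀ t ∈ Ioo (0 : ℝ) 1,
      interactionEnergy F V μ ≤ interactionEnergy F V (mixDirac μ z t)) :
    2 * ∫ p, F p ∂μ.prod μ + ∫ x, V x ∂μ ≤ ∫ x, F (x, z) ∂μ + ∫ y, F (z, y) ∂μ + V z := by
  refine sub_nonneg.1 (nonneg_of_forall_mem_Ioo_nonneg_mul_add_mul_sq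
    (c := ∫ p, F p ∂μ.prod μ - (∫ x, F (x, z) ∂μ + ∫ y, F (z, y) ∂μ) + F (z, z)) fun t ht => ?_)
  have h := hmin t ht
  rw [interactionEnergy, interactionEnergy, integral_prod_mixDirac hF hFl hFr ht.1.le ht.2.le,
    integral_mixDirac hV z ht.1.le ht.2.le] at h
  linear_combination h

end MeasureTheory

lemma Real.abs_log_le_abs_log_add_self {r x : ℝ} (hr : 0 < r) (hx : r ≤ x) :
    |Real.log x| ≤ |Real.log r| + x := by
  rcases le_or_gt x 1 with hx₁ | hx₁
  · rw [abs_of_nonpos (Real.log_nonpos (hr.trans_le hx).le hx₁)]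
    linarith [neg_le_abs (Real.log r), Real.log_le_log hr hx]
  · rw [abs_of_nonneg (Real.log_nonneg hx₁.le)]
    linarith [abs_nonneg (Real.log r), Real.log_le_sub_one_of_pos (hr.trans_le hx)]

noncomputable def anisotropicLogKernel (α : ℝ) (v : ℂ) : ℝ :=
  -Real.log ‖v‖ + α * v.re ^ 2 / ‖v‖ ^ 2

namespace anisotropicLogKernel

variable (α : ℝ)

lemma neg (v : ℂ) : anisotropicLogKernel α (-v) = anisotropicLogKernel α v := by
  simp [anisotropicLogKernel]

lemma measurable : Measurable (anisotropicLogKernel α) := by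
  unfold anisotropicLogKernel
  fun_prop

lemma abs_le_of_le_norm {r : ℝ} (hr : 0 < r) {v : ℂ} (hv : r ≤ ‖v‖) :
    |anisotropicLogKernel α v| ≤ |Real.log r| + |α| + ‖v‖ := by
  have hre : |α * v.re ^ 2 / ‖v‖ ^ 2| ≤ |α| := by
    rw [abs_div, abs_mul, abs_of_nonneg (sq_nonneg v.re), abs_of_nonneg (sq_nonneg ‖v‖)]
    exact div_le_of_le_mul₀ (sq_nonneg _) (abs_nonneg _) (mul_le_mul_of_nonneg_left
      (sq_le_sq' (by linarith [neg_abs_le v.re, abs_re_le_norm v]) (re_le_norm v)) (abs_nonneg _))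
  calc |anisotropicLogKernel α v| ≤ |Real.log ‖v‖| + |α * v.re ^ 2 / ‖v‖ ^ 2| := by
        simpa only [anisotropicLogKernel, abs_neg] using abs_add_le (-Real.log ‖v‖) _
    _ ≤ |Real.log r| + |α| + ‖v‖ := by
        linarith [Real.abs_log_le_abs_log_add_self hr hv]

lemma integrable_comp_const_sub {μ : Measure ℂ} [IsFiniteMeasure μ]
    (hμ : Integrable (fun w : ℂ => ‖w‖) μ) {z : ℂ} {r : ℝ} (hr : 0 < r)
    (hfar : ∀ᵐ w ∂μ, r ≤ dist z w) :
    Integrable (fun w => anisotropicLogKernel α (z - w)) μ := by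
  refine ((integrable_const (|Real.log r| + |α| + ‖z‖)).add hμ).mono'
    ((measurable α).comp (measurable_const.sub measurable_id)).aestronglyMeasurable ?_
  filter_upwards [hfar] with w hw
  rw [dist_eq] at hw
  calc ‖anisotropicLogKernel α (z - w)‖ ≤ |Real.log r| + |α| + ‖z - w‖ :=
        abs_le_of_le_norm α hr hw
    _ ≤ |Real.log r| + |α| + ‖z‖ + ‖w‖ := by linarith [norm_sub_le z w]

end anisotropicLogKernel

theorem potential_ge_off_support_at_minimizer_general
    (α : ℝ)
    (W : ℂ → ℝ)
    (hW : ∀ z : ℂ, z ≠ 0 →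
      W z = -Real.log (‖z‖) + α * z.re ^ 2 / (‖z‖) ^ 2)
    (Iα : Measure ℂ → ℝ)
    (hI : ∀ μ : Measure ℂ, Iα μ =
      (∫ p : ℂ × ℂ, W (p.1 - p.2) ∂(μ.prod μ)) + ∫ z, (‖z‖) ^ 2 ∂μ)
    (μ : Measure ℂ) [IsProbabilityMeasure μ]
    (hμW : Integrable (fun p : ℂ × ℂ => W (p.1 - p.2)) (μ.prod μ))
    (hμconf : Integrable (fun z : ℂ => (‖z‖) ^ 2) μ)
    (hmin : ∀ ν : Measure ℂ, IsProbabilityMeasure ν →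
      Integrable (fun p : ℂ × ℂ => W (p.1 - p.2)) (ν.prod ν) →
      Integrable (fun z : ℂ => (‖z‖) ^ 2) ν →
      Iα μ ≤ Iα ν)
    (P : ℂ → ℝ)
    (hP : ∀ z : ℂ, P z = (∫ w, W (z - w) ∂μ) + (‖z‖) ^ 2 / 2)
    (C₀ : ℝ) (hC₀ : C₀ = ∫ z, P z ∂μ) :
    ∀ z : ℂ, (∃ U : Set ℂ, IsOpen U ∧ z ∈ U ∧ μ U = 0) → C₀ ≤ P z := by
  rintro z ⟨U, hU, hzU, hμU⟩
  obtain ⟨r, hr, hfar⟩ := exists_pos_ae_le_dist_of_measure_eq_zero (hU.mem_nhds hzU) hμU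
  have hne : ∀ᵐ w ∂μ, z - w ≠ 0 := hfar.mono fun w hw h => by
    rw [dist_eq, h, norm_zero] at hw
    linarith
  have hright : (fun w => W (z - w)) =ᵐ[μ] fun w => anisotropicLogKernel α (z - w) :=
    hne.mono fun w hw => hW _ hw
  have hleft : (fun w => W (w - z)) =ᵐ[μ] fun w => anisotropicLogKernel α (z - w) :=
    hne.mono fun w hw => by
      simpa only [neg_sub] using (hW _ (neg_ne_zero.2 hw)).trans (anisotropicLogKernel.neg α _)
  have hK := anisotropicLogKernel.integrable_comp_const_sub α
    (integrable_norm_of_integrable_sq_norm hμconf) hr hfar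
  have hWl := hK.congr hleft.symm
  have hWr := hK.congr hright.symm
  have hEL := two_mul_integral_prod_add_integral_le_of_forall_le_mixDirac
    (F := fun p => W (p.1 - p.2)) (V := fun w => ‖w‖ ^ 2) (z := z) hμW hWl hWr hμconf
    fun t ht => by
      have h := hmin _ (isProbabilityMeasure_mixDirac μ z ht.1.le ht.2.le)
        (integrable_prod_mixDirac hμW hWl hWr t) (integrable_mixDirac hμconf z t)
      rwa [hI, hI] at h
  rw [integral_congr_ae hleft, ← integral_congr_ae hright] at hEL
  simp only [hP] at hC₀
  rw [hC₀, hP, integral_add hμW.integral_prod_left (hμconf.div_const 2), ← integral_prod _ hμW,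
    integral_div]
  linarith

/-- Second Euler–Lagrange condition: if `μ` is a finite-energy probability
measure minimizing `I_α`, and `C₀ = ∫P(μ) dμ`, then `P(μ)(z) ≥ C₀` at every
point `z` outside the support of `μ`. -/
theorem potential_ge_off_support_at_minimizer
    (α : ℝ) (hα : -1 < α) (hα' : α < 1)
    (W : ℂ → ℝ)
    (hW : ∀ z : ℂ, z ≠ 0 →
      W z = -Real.log (‖z‖) + α * z.re ^ 2 / (‖z‖) ^ 2)
    (Iα : Measure ℂ → ℝ)
    (hI : ∀ μ : Measure ℂ, Iα μ =
      (∫ p : ℂ × ℂ, W (p.1 - p.2) ∂(μ.prod μ)) + ∫ z, (‖z‖) ^ 2 ∂μ)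
    (μ : Measure ℂ) [IsProbabilityMeasure μ]
    (hμW : Integrable (fun p : ℂ × ℂ => W (p.1 - p.2)) (μ.prod μ))
    (hμconf : Integrable (fun z : ℂ => (‖z‖) ^ 2) μ)
    (hmin : ∀ ν : Measure ℂ, IsProbabilityMeasure ν →
      Integrable (fun p : ℂ × ℂ => W (p.1 - p.2)) (ν.prod ν) →
      Integrable (fun z : ℂ => (‖z‖) ^ 2) ν →
      Iα μ ≤ Iα ν)
    (P : ℂ → ℝ)
    (hP : ∀ z : ℂ, P z = (∫ w, W (z - w) ∂μ) + (‖z‖) ^ 2 / 2)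
    (C₀ : ℝ) (hC₀ : C₀ = ∫ z, P z ∂μ) :
    ∀ z : ℂ, (∃ U : Set ℂ, IsOpen U ∧ z ∈ U ∧ μ U = 0) → C₀ ≤ P z :=
  potential_ge_off_support_at_minimizer_general α W hW Iα hI μ hμW hμconf hmin P hP C₀ hC₀
end

section
/- As α → 1⁻, the normalized uniform measure on the region enclosed by the ellipse with horizontal semi-axis √(1−α) and vertical semi-axis √(1+α) converges weakly-* (as finite Radon measures on ℝ²) to the semicircle law on the vertical axis, i.e., to the measure (1/π)√(2−y²) χ_{[−√2, √2]}(y) dy supported on the segment {0} × [−√2, √2]. -/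
/-!
The linear map `x + iy ↦ √((1-α)/2) x + i √((1+α)/2) y` carries the disc of radius `√2`
onto the ellipse with Jacobian `√(1-α²)/2`, so the normalized integral over the ellipse
equals `(2π)⁻¹` times the integral of `f` composed with this map over the fixed disc.
As `α → 1` the map tends to `z ↦ i Im z` and dominated convergence applies; integrating
out the real part over the disc (Fubini) turns `∫ f(i Im z)` into `2 ∫ f(iy) √(2 - y²) dy`.
-/

open MeasureTheory Complex Filter Topology Set Metric
open scoped Real

namespace Complex

noncomputable def scaleReIm (a b : ℝ) : ℂ →L[ℝ] ℂ :=
  LinearMap.toContinuousLinearMap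
    { toFun := fun z => ⟨a * z.re, b * z.im⟩
      map_add' := fun z w => Complex.ext (mul_add _ _ _) (mul_add _ _ _)
      map_smul' := fun c z => by apply Complex.ext <;> simp <;> ring }

variable {a b : ℝ}

@[simp] lemma scaleReIm_apply (z : ℂ) : scaleReIm a b z = ⟨a * z.re, b * z.im⟩ := rfl

lemma det_scaleReIm : (scaleReIm a b).det = a * b := by
  rw [ContinuousLinearMap.det, ← LinearMap.det_toMatrix basisOneI, Matrix.det_fin_two]
  simp [LinearMap.toMatrix_apply]

lemma scaleReIm_injective (ha : a ≠ 0) (hb : b ≠ 0) : Function.Injective (scaleReIm a b) :=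
  fun z w h => by
    simp only [scaleReIm_apply, mk.injEq, mul_right_inj' ha, mul_right_inj' hb] at h
    exact Complex.ext h.1 h.2

lemma setIntegral_image_scaleReIm (ha : a ≠ 0) (hb : b ≠ 0) {s : Set ℂ}
    (hs : MeasurableSet s) (f : ℂ → ℝ) :
    ∫ z in scaleReIm a b '' s, f z = |a * b| * ∫ z in s, f (scaleReIm a b z) := by
  rw [integral_image_eq_integral_abs_det_fderiv_smul volume hs
    (fun _ _ => (scaleReIm a b).hasFDerivWithinAt) (scaleReIm_injective ha hb).injOn,
    det_scaleReIm, ← integral_const_mul]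
  rfl

lemma mem_closedBall_zero_iff_sq {r : ℝ} (hr : 0 ≤ r) {z : ℂ} :
    z ∈ closedBall (0 : ℂ) r ↔ z.re ^ 2 + z.im ^ 2 ≤ r ^ 2 := by
  rw [mem_closedBall_zero_iff, ← sq_le_sq₀ (norm_nonneg _) hr, Complex.sq_norm, normSq_apply,
    ← sq, ← sq]

lemma scaleReIm_image_closedBall (ha : 0 < a) (hb : 0 < b) {r : ℝ} (hr : 0 ≤ r) :
    scaleReIm a b '' closedBall 0 r = {z | (z.re / a) ^ 2 + (z.im / b) ^ 2 ≤ r ^ 2} := by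
  ext z
  simp only [mem_image, mem_closedBall_zero_iff_sq hr, mem_ofPred_eq]
  constructor
  · rintro ⟨w, hw, rfl⟩
    simpa [ha.ne', hb.ne'] using hw
  · intro hz
    refine ⟨⟨z.re / a, z.im / b⟩, hz, ?_⟩
    apply Complex.ext <;> simp [mul_div_cancel₀, ha.ne', hb.ne']

lemma scaleReIm_eq_equivRealProdCLM_symm (z : ℂ) :
    scaleReIm a b z = equivRealProdCLM.symm (a * z.re, b * z.im) := rfl

lemma tendsto_setIntegral_comp_scaleReIm {ι : Type*} {l : Filter ι} [l.IsCountablyGenerated]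
    {f : ℂ → ℝ} (hf : Continuous f) (hf_bdd : ∃ M, ∀ z, |f z| ≤ M) {s : Set ℂ}
    (hs : volume s ≠ ⊤) {a b : ι → ℝ} {a₀ b₀ : ℝ} (ha : Tendsto a l (𝓝 a₀))
    (hb : Tendsto b l (𝓝 b₀)) :
    Tendsto (fun t => ∫ z in s, f (scaleReIm (a t) (b t) z)) l
      (𝓝 (∫ z in s, f (scaleReIm a₀ b₀ z))) := by
  obtain ⟨M, hM⟩ := hf_bdd
  refine tendsto_integral_filter_of_dominated_convergence (fun _ => M)
    (.of_forall fun t => (hf.comp (scaleReIm _ _).continuous).aestronglyMeasurable)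
    (.of_forall fun t => .of_forall fun z => hM _) (integrableOn_const hs) (.of_forall fun z => ?_)
  simp only [scaleReIm_eq_equivRealProdCLM_symm]
  exact (hf.comp equivRealProdCLM.symm.continuous).continuousAt.tendsto.comp
    ((ha.mul_const _).prodMk_nhds (hb.mul_const _))

end Complex

lemma Real.volume_real_setOf_sq_le (c : ℝ) : volume.real {x : ℝ | x ^ 2 ≤ c} = 2 * √c := by
  rcases le_or_gt 0 c with hc | hc
  · simp_rw [Real.sq_le hc, ← mem_Icc, ofPred_mem_eq, Real.volume_real_Icc]
    rw [max_eq_left (by linarith [Real.sqrt_nonneg c])]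
    ring
  · have : {x : ℝ | x ^ 2 ≤ c} = ∅ := eq_empty_of_forall_notMem fun x hx => by
      nlinarith [sq_nonneg x, hx.out]
    simp [this, Real.sqrt_eq_zero_of_nonpos hc.le]

lemma setIntegral_closedBall_comp_im {g : ℝ → ℝ} (hg : Continuous g) {r : ℝ}
    (hr : 0 ≤ r) :
    ∫ z in closedBall (0 : ℂ) r, g z.im = 2 * ∫ y in -r..r, g y * √(r ^ 2 - y ^ 2) := by
  set S : Set (ℝ × ℝ) := {p | p.1 ^ 2 + p.2 ^ 2 ≤ r ^ 2}
  have hS : MeasurableSet S := measurableSet_le (by fun_prop) measurable_const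
  have hball : closedBall (0 : ℂ) r = measurableEquivRealProd ⁻¹' S := by
    ext z; exact mem_closedBall_zero_iff_sq hr
  have he := measurableEquivRealProd.measurableEmbedding
  have hint : IntegrableOn (fun p : ℝ × ℝ => g p.2) S := by
    rw [← volume_preserving_equiv_real_prod.integrableOn_comp_preimage he, ← hball]
    exact (hg.comp continuous_im).continuousOn.integrableOn_compact (isCompact_closedBall 0 r)
  have hslice (y : ℝ) :
      ∫ x, S.indicator (fun p => g p.2) (x, y) = 2 * (g y * √(r ^ 2 - y ^ 2)) := by
    have : (fun x => S.indicator (fun p => g p.2) (x, y)) =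
        {x : ℝ | x ^ 2 ≤ r ^ 2 - y ^ 2}.indicator fun _ => g y := by
      ext x
      simp only [indicator, S, mem_ofPred_eq, le_sub_iff_add_le]
    rw [this, integral_indicator (measurableSet_le (by fun_prop) measurable_const),
      setIntegral_const, Real.volume_real_setOf_sq_le, smul_eq_mul]
    ring
  have hvanish : ∀ y ∉ Ioc (-r) r, g y * √(r ^ 2 - y ^ 2) = 0 := fun y hy => by
    have : r ^ 2 - y ^ 2 ≤ 0 := by
      simp only [mem_Ioc, not_and_or, not_lt, not_le] at hy
      rcases hy with hy | hy <;> nlinarith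
    rw [Real.sqrt_eq_zero_of_nonpos this, mul_zero]
  calc ∫ z in closedBall (0 : ℂ) r, g z.im
      = ∫ p in S, g p.2 := by
        rw [hball]
        exact volume_preserving_equiv_real_prod.setIntegral_preimage_emb he (fun p => g p.2) S
    _ = ∫ y, ∫ x, S.indicator (fun p => g p.2) (x, y) := by
        rw [← integral_indicator hS, Measure.volume_eq_prod]
        exact integral_prod_symm _ (hint.integrable_indicator hS)
    _ = 2 * ∫ y in -r..r, g y * √(r ^ 2 - y ^ 2) := by
        rw [intervalIntegral.integral_of_le (by linarith),
          setIntegral_eq_integral_of_forall_compl_eq_zero hvanish, ← integral_const_mul]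
        simp_rw [hslice]

lemma ellipse_eq_scaleReIm_image_closedBall {α : ℝ} (hα : α ∈ Ioo (-1 : ℝ) 1) :
    {z : ℂ | z.re ^ 2 / (1 - α) + z.im ^ 2 / (1 + α) ≤ 1} =
      scaleReIm √((1 - α) / 2) √((1 + α) / 2) '' closedBall 0 √2 := by
  obtain ⟨h₁, h₂⟩ := hα
  have ha : 0 < (1 - α) / 2 := by linarith
  have hb : 0 < (1 + α) / 2 := by linarith
  rw [scaleReIm_image_closedBall (Real.sqrt_pos.2 ha) (Real.sqrt_pos.2 hb) (Real.sqrt_nonneg 2)]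
  ext z
  have key : (z.re / √((1 - α) / 2)) ^ 2 + (z.im / √((1 + α) / 2)) ^ 2 =
      2 * (z.re ^ 2 / (1 - α) + z.im ^ 2 / (1 + α)) := by
    rw [div_pow, div_pow, Real.sq_sqrt ha.le, Real.sq_sqrt hb.le]
    field_simp
  simp only [mem_ofPred_eq, key, Real.sq_sqrt zero_le_two]
  constructor <;> intro h <;> linarith

lemma setIntegral_ellipse_div {α : ℝ} (hα : α ∈ Ioo (-1 : ℝ) 1) (f : ℂ → ℝ) :
    (∫ z in {z : ℂ | z.re ^ 2 / (1 - α) + z.im ^ 2 / (1 + α) ≤ 1}, f z) /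
        (π * √(1 - α ^ 2)) =
      1 / (2 * π) * ∫ z in closedBall (0 : ℂ) √2,
        f (scaleReIm √((1 - α) / 2) √((1 + α) / 2) z) := by
  have ha : 0 < √((1 - α) / 2) := Real.sqrt_pos.2 (by linarith [hα.2])
  have hb : 0 < √((1 + α) / 2) := Real.sqrt_pos.2 (by linarith [hα.1])
  have hab : √((1 - α) / 2) * √((1 + α) / 2) = √(1 - α ^ 2) / 2 := by
    rw [← Real.sqrt_mul (by linarith [hα.2]),
      show (1 - α) / 2 * ((1 + α) / 2) = (1 - α ^ 2) / 2 ^ 2 by ring,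
      Real.sqrt_div' _ (by positivity), Real.sqrt_sq zero_le_two]
  have hpos : 0 < √(1 - α ^ 2) := Real.sqrt_pos.2 (by nlinarith [hα.1, hα.2])
  rw [ellipse_eq_scaleReIm_image_closedBall hα,
    setIntegral_image_scaleReIm ha.ne' hb.ne' measurableSet_closedBall,
    abs_of_pos (mul_pos ha hb), hab]
  field_simp

/-- As `α → 1⁻`, the normalized uniform measure on the ellipse region
`{x²/(1−α) + y²/(1+α) ≤ 1}` converges weakly-* to the semicircle law
`(1/π)√(2−y²) χ_{[−√2,√2]}(y) dy` on the vertical axis. -/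
theorem ellipse_measures_tendsto_semicircle
    (f : ℂ → ℝ) (hf_cont : Continuous f) (hf_bdd : ∃ M : ℝ, ∀ z : ℂ, |f z| ≤ M) :
    Filter.Tendsto
      (fun α : ℝ =>
        (∫ z in {z : ℂ | z.re ^ 2 / (1 - α) + z.im ^ 2 / (1 + α) ≤ 1}, f z) /
          (Real.pi * Real.sqrt (1 - α ^ 2)))
      (nhdsWithin 1 (Set.Ioo (-1 : ℝ) 1))
      (nhds ((1 / Real.pi) *
        ∫ y in (-Real.sqrt 2)..Real.sqrt 2, f (y • Complex.I) * Real.sqrt (2 - y ^ 2))) := by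
  have ha : Tendsto (fun α : ℝ => √((1 - α) / 2)) (𝓝[Ioo (-1) 1] 1) (𝓝 0) :=
    tendsto_nhdsWithin_of_tendsto_nhds <|
      (by fun_prop : Continuous fun α : ℝ => √((1 - α) / 2)).tendsto' 1 0 (by simp)
  have hb : Tendsto (fun α : ℝ => √((1 + α) / 2)) (𝓝[Ioo (-1) 1] 1) (𝓝 1) :=
    tendsto_nhdsWithin_of_tendsto_nhds <|
      (by fun_prop : Continuous fun α : ℝ => √((1 + α) / 2)).tendsto' 1 1 (by norm_num)
  have hlim :=
    tendsto_setIntegral_comp_scaleReIm hf_cont hf_bdd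
      (measure_closedBall_lt_top (x := (0 : ℂ)) (r := √2)).ne ha hb
  have hsemicircle : ∫ z in closedBall (0 : ℂ) √2, f (scaleReIm 0 1 z) =
      2 * ∫ y in -√2..√2, f (y • I) * √(2 - y ^ 2) := by
    have hI (z : ℂ) : scaleReIm 0 1 z = z.im • I := by apply Complex.ext <;> simp
    simp only [hI]
    convert setIntegral_closedBall_comp_im (g := fun y => f (y • I)) (by fun_prop)
      (Real.sqrt_nonneg 2) using 4
    rw [Real.sq_sqrt zero_le_two]
  convert (hlim.const_mul (1 / (2 * π))).congr'
    (eventually_nhdsWithin_of_forall fun α hα => (setIntegral_ellipse_div hα f).symm) using 2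
  rw [hsemicircle]
  ring
end
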